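/- Let D ⊆ [0,1]ⁿ be a convex set and let u* ∈ D satisfy u* ≻_L u for every u ∈ D with u ≠ u* (u* is the lexicographic maxmin solution over D). Then u* strictly D-dominates every u ∈ D with u ≠ u*, i.e., π(u*, u) ≻_L π(u, u*) for all such u. -/

import Mathlib

/-- The components of `p`, sorted in nondecreasing order. -/
noncomputable def sortedVec {n : ℕ} (p : Fin n → ℝ) : List ℝ :=
  (Multiset.ofList (List.ofFn p)).sort (· ≤ ·)

/-- `p ≻_L q` : strict leximin dominance (the sorted lists are compared
lexicographically, from smallest component to largest). -/
def LeximinGT {n : ℕ} (p q : Fin n → ℝ) : Prop :=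
  List.Lex (· < ·) (sortedVec q) (sortedVec p)

/-- `p ⪰_L q` : weak leximin dominance. -/
def LeximinGE {n : ℕ} (p q : Fin n → ℝ) : Prop :=
  LeximinGT p q ∨ sortedVec p = sortedVec q

/-- Disagreement projection of `u` onto `v`: `π(u,v)ᵢ = uᵢ` if `uᵢ < vᵢ`, else `1`. -/
noncomputable def dproj {n : ℕ} (u v : Fin n → ℝ) : Fin n → ℝ :=
  fun i => if u i < v i then u i else 1

/- ----------------- auxiliary lemmas ----------------- -/

private lemma sortedVec_sorted {n : ℕ} (p : Fin n → ℝ) :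
    (sortedVec p).Pairwise (· ≤ ·) := Multiset.pairwise_sort _ _

private lemma sortedVec_perm {n : ℕ} (p : Fin n → ℝ) :
    (sortedVec p).Perm (List.ofFn p) := by
  rw [← Multiset.coe_eq_coe]
  exact Multiset.sort_eq _ _

private lemma sortedVec_length {n : ℕ} (p : Fin n → ℝ) :
    (sortedVec p).length = n := by
  rw [(sortedVec_perm p).length_eq, List.length_ofFn]

private lemma sortedVec_count {n : ℕ} (p : Fin n → ℝ) (y : ℝ) :
    (sortedVec p).count y = (List.ofFn p).count y :=
  (sortedVec_perm p).count_eq y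

/-- Key criterion: if two sorted lists of the same length have equal counts of all
values below `x`, and `l₁` has strictly more copies of `x`, then `l₁ <lex l₂`. -/
private lemma countLex : ∀ (l₁ l₂ : List ℝ), l₁.Pairwise (· ≤ ·) → l₂.Pairwise (· ≤ ·) →
    l₁.length = l₂.length → ∀ x : ℝ, (∀ y, y < x → l₁.count y = l₂.count y) →
    l₂.count x < l₁.count x → List.Lex (· < ·) l₁ l₂
  | [], _, _, _, _, x, _, hx => absurd hx (by simp)
  | _ :: _, [], _, _, hlen, _, _, _ => by simp at hlen
  | a :: t₁, b :: t₂, h₁, h₂, hlen, x, hlow, hx => by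
    rcases lt_trichotomy a b with hab | hab | hab
    · exact List.Lex.rel hab
    · subst hab
      apply List.Lex.cons
      apply countLex t₁ t₂ h₁.of_cons h₂.of_cons (by simpa using hlen) x
      · intro y hy
        have h := hlow y hy
        rw [List.count_cons, List.count_cons] at h
        exact Nat.add_right_cancel h
      · have h := hx
        rw [List.count_cons, List.count_cons] at h
        exact Nat.lt_of_add_lt_add_right h
    · exfalso
      rcases lt_or_ge b x with hbx | hbx
      · have h := hlow b hbx
        have hb1 : (a :: t₁).count b = 0 := by
          rw [List.count_eq_zero]
          intro hmem
          rcases List.mem_cons.mp hmem with h' | h'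
          · exact absurd h' (ne_of_lt hab)
          · exact absurd ((List.pairwise_cons.mp h₁).1 b h') (not_le.mpr hab)
        have hb2 : 0 < (b :: t₂).count b := by
          rw [List.count_pos_iff]; exact List.mem_cons_self (a := b) (l := t₂)
        omega
      · have hxm : x ∈ a :: t₁ := List.count_pos_iff.mp (Nat.lt_of_le_of_lt (Nat.zero_le _) hx)
        have hax : a ≤ x := by
          rcases List.mem_cons.mp hxm with h' | h'
          · exact le_of_eq h'.symm
          · exact (List.pairwise_cons.mp h₁).1 x h'
        linarith

private lemma lex_asymm : ∀ {l₁ l₂ : List ℝ},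
    List.Lex (· < ·) l₁ l₂ → List.Lex (· < ·) l₂ l₁ → False := by
  intro l₁ l₂ h
  induction h with
  | nil => intro h'; cases h'
  | @rel a l₁ b l₂ hab =>
    intro h'
    cases h' with
    | rel hba => exact absurd hab (lt_asymm hba)
    | cons _ => exact lt_irrefl _ hab
  | @cons a l₁ l₂ _ ih =>
    intro h'
    cases h' with
    | rel hba => exact lt_irrefl _ hba
    | cons h'' => exact ih h''

private lemma count_ofFn_congr : ∀ {n : ℕ} (p q : Fin n → ℝ) (y z : ℝ),
    (∀ i, p i = y ↔ q i = z) → (List.ofFn p).count y = (List.ofFn q).count z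
  | 0, _, _, _, _, _ => by simp
  | n + 1, p, q, y, z, h => by
    rw [List.ofFn_succ, List.ofFn_succ, List.count_cons, List.count_cons,
      count_ofFn_congr (fun i => p i.succ) (fun i => q i.succ) y z (fun i => h i.succ)]
    congr 1
    by_cases h0 : p 0 = y
    · simp [h0, (h 0).mp h0]
    · have h0' : ¬ q 0 = z := fun hq => h0 ((h 0).mpr hq)
      simp [h0, h0']

private lemma count_ofFn_le : ∀ {n : ℕ} (p q : Fin n → ℝ) (y : ℝ),
    (∀ i, q i = y → p i = y) → (List.ofFn q).count y ≤ (List.ofFn p).count y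
  | 0, _, _, _, _ => by simp
  | n + 1, p, q, y, h => by
    rw [List.ofFn_succ, List.ofFn_succ, List.count_cons, List.count_cons]
    have htail := count_ofFn_le (fun i => p i.succ) (fun i => q i.succ) y
      (fun i => h i.succ)
    have hhead : (if (q 0 == y) = true then 1 else 0) ≤
        (if (p 0 == y) = true then 1 else 0) := by
      by_cases h0 : q 0 = y
      · simp [h0, h 0 h0]
      · simp [h0]
    omega

private lemma count_ofFn_lt : ∀ {n : ℕ} (p q : Fin n → ℝ) (y : ℝ),
    (∀ i, q i = y → p i = y) → ∀ (i₀ : Fin n), p i₀ = y → ¬ q i₀ = y →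
    (List.ofFn q).count y < (List.ofFn p).count y
  | 0, _, _, _, _, i₀, _, _ => absurd i₀.2 (by simp)
  | n + 1, p, q, y, h, i₀, hp0, hq0 => by
    rw [List.ofFn_succ, List.ofFn_succ, List.count_cons, List.count_cons]
    rcases Fin.eq_zero_or_eq_succ i₀ with h0 | ⟨j, rfl⟩
    · subst h0
      have htail := count_ofFn_le (fun i => p i.succ) (fun i => q i.succ) y
        (fun i => h i.succ)
      have e1 : (if (q 0 == y) = true then 1 else 0) = 0 := by simp [hq0]
      have e2 : (if (p 0 == y) = true then 1 else 0) = 1 := by simp [hp0]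
      rw [e1, e2]
      omega
    · have htail := count_ofFn_lt (fun i => p i.succ) (fun i => q i.succ) y
        (fun i => h i.succ) j hp0 hq0
      have hhead : (if (q 0 == y) = true then 1 else 0) ≤
          (if (p 0 == y) = true then 1 else 0) := by
        by_cases h0 : q 0 = y
        · simp [h0, h 0 h0]
        · simp [h0]
      omega

/-- The convexity argument: if `ustar i₀ < u i₀`, `ustar i₀` is minimal among the
values of `ustar` on coordinates where `ustar < u`, and every coordinate where
`u < ustar` has `u`-value at least `ustar i₀`, then `ustar` is not leximin optimal:
contradiction. -/
private lemma branch2 {n : ℕ} (D : Set (Fin n → ℝ)) (hconv : Convex ℝ D)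
    (ustar : Fin n → ℝ) (hmem : ustar ∈ D)
    (hmax : ∀ u ∈ D, u ≠ ustar → LeximinGT ustar u)
    (u : Fin n → ℝ) (hu : u ∈ D) (i₀ : Fin n) (h0 : ustar i₀ < u i₀)
    (hαmin : ∀ i, ustar i < u i → ustar i₀ ≤ ustar i)
    (hB : ∀ i, u i < ustar i → ustar i₀ ≤ u i) : False := by
  set α := ustar i₀ with hα
  -- choose ε
  set f : Fin n → ℝ := fun i =>
    if u i < ustar i then (ustar i - α) / (2 * (ustar i - u i)) else 1 / 2 with hf
  obtain ⟨k, -, hk⟩ := Finset.exists_min_image Finset.univ f ⟨i₀, Finset.mem_univ _⟩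
  set ε := f k with hε
  have hfi₀ : f i₀ = 1 / 2 := by
    rw [hf]; exact if_neg (not_lt.mpr (le_of_lt h0))
  have hε1 : ε ≤ 1 / 2 := by
    rw [hε, ← hfi₀]; exact hk i₀ (Finset.mem_univ _)
  have hε0 : 0 < ε := by
    rw [hε, hf]
    by_cases hk' : u k < ustar k
    · simp only [if_pos hk']
      have h1 : α ≤ u k := hB k hk'
      apply div_pos <;> linarith
    · simp only [if_neg hk']; norm_num
  -- the perturbed point
  set w : Fin n → ℝ := fun i => (1 - ε) * ustar i + ε * u i with hw
  have hwD : w ∈ D := by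
    have h' := hconv hmem hu (by linarith : (0:ℝ) ≤ 1 - ε) (le_of_lt hε0) (by ring)
    have heq : w = (1 - ε) • ustar + ε • u := by
      funext i
      simp [hw, smul_eq_mul]
    rw [heq]
    exact h'
  -- pointwise behaviour of w
  have hweq : ∀ i, u i = ustar i → w i = ustar i := by
    intro i hi; rw [hw]; simp only; rw [hi]; ring
  have hwA : ∀ i, ustar i < u i → ustar i < w i := by
    intro i hi
    have := mul_pos hε0 (sub_pos.mpr hi)
    rw [hw]; simp only; nlinarith
  have hwB : ∀ i, u i < ustar i → α < w i := by
    intro i hi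
    have hαi : α ≤ u i := hB i hi
    have hd : 0 < ustar i - u i := by linarith
    have hr : 0 < ustar i - α := by linarith
    have hfi : ε ≤ (ustar i - α) / (2 * (ustar i - u i)) := by
      have h' := hk i (Finset.mem_univ i)
      simp only [hf] at h'
      rwa [if_pos hi] at h'
    have h2d : (0:ℝ) < 2 * (ustar i - u i) := by linarith
    have := (le_div_iff₀ h2d).mp hfi
    have hεd : 0 < ε * (ustar i - u i) := mul_pos hε0 hd
    rw [hw]; simp only; nlinarith
  have hwne : w ≠ ustar := by
    intro he
    have := congrFun he i₀
    have := hwA i₀ h0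
    linarith
  have hcontra : List.Lex (· < ·) (sortedVec w) (sortedVec ustar) :=
    hmax w hwD hwne
  have hmylex : List.Lex (· < ·) (sortedVec ustar) (sortedVec w) := by
    apply countLex _ _ (sortedVec_sorted _) (sortedVec_sorted _)
      (by rw [sortedVec_length, sortedVec_length]) α
    · intro y hy
      rw [sortedVec_count, sortedVec_count]
      apply count_ofFn_congr
      intro i
      rcases lt_trichotomy (u i) (ustar i) with hi | hi | hi
      · have h1 := hwB i hi
        have h2 : α < ustar i := lt_of_le_of_lt (hB i hi) hi
        constructor <;> intro h' <;> linarith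
      · rw [hweq i hi]
      · have h1 := hwA i hi
        have h2 := hαmin i hi
        constructor <;> intro h' <;> linarith
    · rw [sortedVec_count, sortedVec_count]
      apply count_ofFn_lt ustar w α _ i₀ rfl
      · have h'' := hwA i₀ h0
        exact fun h' => ne_of_gt h'' h'
      · intro i hi
        rcases lt_trichotomy (u i) (ustar i) with h' | h' | h'
        · exact absurd hi (ne_of_gt (hwB i h'))
        · rw [← hweq i h']; exact hi
        · exact absurd hi (ne_of_gt (lt_of_le_of_lt (hαmin i h') (hwA i h')))
  exact lex_asymm hcontra hmylex

/-- the lexicographic maxmin solution of a convex `D ⊆ [0,1]ⁿ`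
strictly D-dominates every other point of `D`. -/
theorem stmt_3 {n : ℕ} (D : Set (Fin n → ℝ))
    (hD : ∀ u ∈ D, ∀ i, u i ∈ Set.Icc (0 : ℝ) 1)
    (hconv : Convex ℝ D) (ustar : Fin n → ℝ) (hmem : ustar ∈ D)
    (hmax : ∀ u ∈ D, u ≠ ustar → LeximinGT ustar u) :
    ∀ u ∈ D, u ≠ ustar → LeximinGT (dproj ustar u) (dproj u ustar) := by
  intro u hu hne
  have hu1 : ∀ i, u i ≤ 1 := fun i => (hD u hu i).2
  have hustar1 : ∀ i, ustar i ≤ 1 := fun i => (hD ustar hmem i).2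
  by_cases hBne : ∃ j, u j < ustar j
  · obtain ⟨j₁, hj₁⟩ := hBne
    obtain ⟨j, hjmem, hjmin⟩ := Finset.exists_min_image
      (Finset.univ.filter fun i => u i < ustar i) u ⟨j₁, by simp [hj₁]⟩
    simp only [Finset.mem_filter, Finset.mem_univ, true_and] at hjmem
    have hjmin' : ∀ i, u i < ustar i → u j ≤ u i := fun i hi =>
      hjmin i (by simp [hi])
    by_cases hsep : ∀ i, ustar i < u i → u j < ustar i
    · -- Branch 1 : conclude directly
      unfold LeximinGT
      have hj1 : u j < 1 := lt_of_lt_of_le hjmem (hustar1 j)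
      apply countLex _ _ (sortedVec_sorted _) (sortedVec_sorted _)
        (by rw [sortedVec_length, sortedVec_length]) (u j)
      · intro y hy
        rw [sortedVec_count, sortedVec_count]
        have h1 : (List.ofFn (dproj u ustar)).count y = 0 := by
          rw [List.count_eq_zero]
          intro hmem'
          obtain ⟨i, hi⟩ := List.mem_ofFn.mp hmem'
          rw [dproj] at hi
          split_ifs at hi with h'
          · have := hjmin' i h'; linarith
          · linarith
        have h2 : (List.ofFn (dproj ustar u)).count y = 0 := by
          rw [List.count_eq_zero]
          intro hmem'
          obtain ⟨i, hi⟩ := List.mem_ofFn.mp hmem'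
          rw [dproj] at hi
          split_ifs at hi with h'
          · have := hsep i h'; linarith
          · linarith
        rw [h1, h2]
      · rw [sortedVec_count, sortedVec_count]
        have h2 : (List.ofFn (dproj ustar u)).count (u j) = 0 := by
          rw [List.count_eq_zero]
          intro hmem'
          obtain ⟨i, hi⟩ := List.mem_ofFn.mp hmem'
          rw [dproj] at hi
          split_ifs at hi with h'
          · have := hsep i h'; linarith
          · linarith
        rw [h2]
        rw [List.count_pos_iff, List.mem_ofFn]
        exact ⟨j, by simp [dproj, hjmem]⟩
    · -- Branch 2 : contradiction with optimality
      exfalso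
      push_neg at hsep
      obtain ⟨i₁, hi₁, hi₁'⟩ := hsep
      obtain ⟨i₀, hi₀mem, hi₀min⟩ := Finset.exists_min_image
        (Finset.univ.filter fun i => ustar i < u i) ustar ⟨i₁, by simp [hi₁]⟩
      simp only [Finset.mem_filter, Finset.mem_univ, true_and] at hi₀mem
      have hi₀min' : ∀ i, ustar i < u i → ustar i₀ ≤ ustar i := fun i hi =>
        hi₀min i (by simp [hi])
      apply branch2 D hconv ustar hmem hmax u hu i₀ hi₀mem hi₀min'
      intro i hi
      exact le_trans (le_trans (hi₀min' i₁ hi₁) hi₁') (hjmin' i hi)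
  · -- `u ≥ ustar` pointwise : contradiction with optimality
    exfalso
    push_neg at hBne
    have hA : ∃ i, ustar i < u i := by
      rcases Function.ne_iff.mp hne with ⟨i, hi⟩
      exact ⟨i, lt_of_le_of_ne (hBne i) (Ne.symm hi)⟩
    obtain ⟨i₁, hi₁⟩ := hA
    obtain ⟨i₀, hi₀mem, hi₀min⟩ := Finset.exists_min_image
      (Finset.univ.filter fun i => ustar i < u i) ustar ⟨i₁, by simp [hi₁]⟩
    simp only [Finset.mem_filter, Finset.mem_univ, true_and] at hi₀mem
    have hi₀min' : ∀ i, ustar i < u i → ustar i₀ ≤ ustar i := fun i hi =>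
      hi₀min i (by simp [hi])
    apply branch2 D hconv ustar hmem hmax u hu i₀ hi₀mem hi₀min'
    intro i hi
    exact absurd hi (not_lt.mpr (hBne i))
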